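/- For any full conjunctive query $Q$ with multivariate extension $\widehat Q$, we have $\mathsf{w}(Q) \le \mathsf{w}(\widehat Q) \le \mathsf{w}(Q) + 1$, where $\mathsf{w}$ denotes fractional hypertree width and $\mathsf{w}(\widehat Q)$ is the maximum of $\mathsf{w}(\widehat Q_\sigma)$ over all components $\sigma$. -/

import Mathlib

/-- The set `at(x)` of (indices of) atoms whose schema contains variable `x`. -/
def atomsOf {k : ℕ} {V : Type*} [DecidableEq V] (X : Fin k → Finset V) (x : V) :
    Finset (Fin k) :=
  Finset.univ.filter (fun i => x ∈ X i)

/-- A query with atom schemas `X` is **hierarchical** if for every pair of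
variables `x, y`, either `at(x) ⊆ at(y)`, or `at(y) ⊆ at(x)`, or
`at(x) ∩ at(y) = ∅`. -/
def Hierarchical {k : ℕ} {V : Type*} [DecidableEq V] (X : Fin k → Finset V) : Prop :=
  ∀ x y : V, atomsOf X x ⊆ atomsOf X y ∨ atomsOf X y ⊆ atomsOf X x ∨
    atomsOf X x ∩ atomsOf X y = ∅

/-- The atom schemas of the component `Q̂_σ` of the multivariate extension of
the query with atom schemas `X`: for a permutation `σ` of `[k]` and fresh
variables `Z_1, …, Z_k` (represented by `Sum.inr`), the `i`-th atom of `Q̂_σ`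
has schema `{Z_1, …, Z_i} ∪ X (σ i)`. -/
def hatSchema {k : ℕ} {V : Type*} [DecidableEq V]
    (X : Fin k → Finset V) (σ : Equiv.Perm (Fin k)) (i : Fin k) :
    Finset (V ⊕ Fin k) :=
  (X (σ i)).image Sum.inl ∪
    (Finset.univ.filter (fun j : Fin k => j ≤ i)).image Sum.inr

/-- The **fractional edge cover number** `ρ*` of the query with atom schemas
`X` restricted to the set `B` of variables: the infimum of `∑ i, λ i` over all
nonnegative weightings `λ` of the atoms such that every variable in `B` is
covered with total weight at least `1` by the atoms containing it. -/
noncomputable def rhoStar {k : ℕ} {W : Type*} [DecidableEq W]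
    (X : Fin k → Finset W) (B : Finset W) : ℝ :=
  sInf {s : ℝ | ∃ lam : Fin k → ℝ, (∀ i, 0 ≤ lam i) ∧
    (∀ w ∈ B, 1 ≤ ∑ i ∈ Finset.univ.filter (fun i => w ∈ X i), lam i) ∧
    s = ∑ i : Fin k, lam i}

/-- A **tree decomposition** of the query with atom schemas `X`: a finite tree
`G` on nodes `ι` with bags `bag t` of variables, such that every atom's schema
is contained in some bag, and for every variable the bags containing it induce
a connected subtree. -/
structure TreeDecomp {k : ℕ} {W : Type*} (X : Fin k → Finset W) where
  ι : Type
  [instFin : Fintype ι]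
  G : SimpleGraph ι
  isTree : G.IsTree
  bag : ι → Finset W
  covers : ∀ i : Fin k, ∃ t : ι, X i ⊆ bag t
  connected : ∀ w : W, (G.induce {t | w ∈ bag t}).Preconnected

attribute [instance] TreeDecomp.instFin

/-- The **width** of a tree decomposition: the maximum over its bags of the
fractional edge cover number of the query restricted to the bag. -/
noncomputable def tdWidth {k : ℕ} {W : Type*} [DecidableEq W]
    (X : Fin k → Finset W) (D : TreeDecomp X) : ℝ :=
  ⨆ t : D.ι, rhoStar X (D.bag t)

/-- The **fractional hypertree width** `w(Q)` of the query with atom schemas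
`X`: the infimum of the widths of its tree decompositions. -/
noncomputable def fhtw {k : ℕ} {W : Type*} [DecidableEq W]
    (X : Fin k → Finset W) : ℝ :=
  sInf {w : ℝ | ∃ D : TreeDecomp X, tdWidth X D = w}

/-! Both inequalities are proved bag by bag. Deleting the fresh variables `Z` from the bags of a
tree decomposition of `Q̂_σ` gives one of `Q`, and a fractional edge cover of a bag of `Q̂_σ`,
reindexed along `σ`, covers what is left of the bag. Conversely, adding all of `Z` to every bag
of a tree decomposition of `Q` gives one of `Q̂_σ`: a cover of a bag of `Q`, reindexed along `σ`,
covers the old variables, and weight `1` on the last atom `R̂_{σ_k}`, which contains every `Z_i`,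
covers the new ones. -/

open Finset

section FractionalEdgeCover

variable {k m : ℕ} {W W' : Type*} [DecidableEq W] [DecidableEq W']

def IsFractionalEdgeCover (X : Fin k → Finset W) (B : Finset W) (lam : Fin k → ℝ) : Prop :=
  (∀ i, 0 ≤ lam i) ∧ ∀ w ∈ B, 1 ≤ ∑ i ∈ univ.filter (fun i => w ∈ X i), lam i

lemma rhoStar_nonneg (X : Fin k → Finset W) (B : Finset W) : 0 ≤ rhoStar X B := by
  apply Real.sInf_nonneg
  rintro s ⟨lam, h0, -, rfl⟩
  exact sum_nonneg fun i _ => h0 i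

lemma rhoStar_le_sum {X : Fin k → Finset W} {B : Finset W} {lam : Fin k → ℝ}
    (h : IsFractionalEdgeCover X B lam) : rhoStar X B ≤ ∑ i, lam i :=
  csInf_le ⟨0, by rintro s ⟨lam, h0, -, rfl⟩; exact sum_nonneg fun i _ => h0 i⟩
    ⟨lam, h.1, h.2, rfl⟩

/-- `hback` is needed because `rhoStar Y B'` is `sInf ∅ = 0` when `B'` has no cover. -/
lemma rhoStar_le_add_of_forall {X : Fin k → Finset W} {Y : Fin m → Finset W'}
    {B : Finset W} {B' : Finset W'} {c : ℝ} (hc : 0 ≤ c)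
    (hforth : ∀ lam, IsFractionalEdgeCover X B lam →
      ∃ mu, IsFractionalEdgeCover Y B' mu ∧ ∑ j, mu j ≤ ∑ i, lam i + c)
    (hback : ∀ mu, IsFractionalEdgeCover Y B' mu → ∃ lam, IsFractionalEdgeCover X B lam) :
    rhoStar Y B' ≤ rhoStar X B + c := by
  by_cases hX : ∃ lam, IsFractionalEdgeCover X B lam
  · obtain ⟨lam, hlam⟩ := hX
    suffices rhoStar Y B' - c ≤ rhoStar X B by linarith
    refine le_csInf ⟨_, lam, hlam.1, hlam.2, rfl⟩ ?_
    rintro s ⟨lam, h0, hcov, rfl⟩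
    obtain ⟨mu, hmu, hsum⟩ := hforth lam ⟨h0, hcov⟩
    linarith [rhoStar_le_sum hmu]
  · have hY : {s : ℝ | ∃ mu : Fin m → ℝ, (∀ j, 0 ≤ mu j) ∧
        (∀ w ∈ B', 1 ≤ ∑ j ∈ univ.filter (fun j => w ∈ Y j), mu j) ∧ s = ∑ j, mu j} = ∅ :=
      Set.eq_empty_of_forall_notMem fun _ ⟨mu, h0, hcov, _⟩ => hX (hback mu ⟨h0, hcov⟩)
    rw [rhoStar, hY, Real.sInf_empty]
    linarith [rhoStar_nonneg X B]

end FractionalEdgeCover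

section MultivariateExtension

variable {k : ℕ} {V : Type*} [DecidableEq V] (X : Fin k → Finset V) (σ : Equiv.Perm (Fin k))

@[simp]
lemma inl_mem_hatSchema (x : V) (j : Fin k) : Sum.inl x ∈ hatSchema X σ j ↔ x ∈ X (σ j) := by
  simp [hatSchema]

@[simp]
lemma inr_mem_hatSchema (z j : Fin k) : Sum.inr z ∈ hatSchema X σ j ↔ z ≤ j := by
  simp [hatSchema]

lemma sum_filter_inl_mem_hatSchema (x : V) (lam : Fin k → ℝ) :
    ∑ j ∈ univ.filter (fun j => Sum.inl x ∈ hatSchema X σ j), lam j =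
      ∑ i ∈ univ.filter (fun i => x ∈ X i), lam (σ.symm i) := by
  rw [sum_filter, sum_filter]
  exact Fintype.sum_equiv σ _ _ fun j => by simp

variable {X σ}

lemma IsFractionalEdgeCover.of_hatSchema {Bh : Finset (V ⊕ Fin k)} {B : Finset V}
    {lam : Fin k → ℝ} (h : IsFractionalEdgeCover (hatSchema X σ) Bh lam)
    (hB : ∀ x ∈ B, Sum.inl x ∈ Bh) :
    IsFractionalEdgeCover X B (fun i => lam (σ.symm i)) :=
  ⟨fun i => h.1 _, fun x hx => by
    simpa only [sum_filter_inl_mem_hatSchema] using h.2 _ (hB x hx)⟩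

def lastAtomWeight (j : Fin k) : ℝ := if ∀ i, i ≤ j then 1 else 0

lemma lastAtomWeight_nonneg (j : Fin k) : 0 ≤ lastAtomWeight j := by
  unfold lastAtomWeight
  split_ifs <;> norm_num

lemma sum_lastAtomWeight_le_one : ∑ j : Fin k, lastAtomWeight j ≤ 1 := by
  simp only [lastAtomWeight]
  rw [sum_boole, Nat.cast_le_one]
  exact card_le_one.mpr fun a ha b hb =>
    le_antisymm ((mem_filter.mp hb).2 a) ((mem_filter.mp ha).2 b)

lemma IsFractionalEdgeCover.lift_hatSchema {Bh : Finset (V ⊕ Fin k)} {B : Finset V}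
    {lam : Fin k → ℝ} (h : IsFractionalEdgeCover X B lam)
    (hB : ∀ x, Sum.inl x ∈ Bh → x ∈ B) :
    IsFractionalEdgeCover (hatSchema X σ) Bh (fun j => lam (σ j) + lastAtomWeight j) := by
  refine ⟨fun j => add_nonneg (h.1 _) (lastAtomWeight_nonneg j), ?_⟩
  rintro (x | z) hw
  · calc (1 : ℝ) ≤ ∑ i ∈ univ.filter (fun i => x ∈ X i), lam i := h.2 x (hB x hw)
      _ = ∑ j ∈ univ.filter (fun j => Sum.inl x ∈ hatSchema X σ j), lam (σ j) := by
        simp only [sum_filter_inl_mem_hatSchema, Equiv.apply_symm_apply]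
      _ ≤ _ := sum_le_sum fun j _ => le_add_of_nonneg_right (lastAtomWeight_nonneg j)
  · have : Nonempty (Fin k) := ⟨z⟩
    obtain ⟨top, htop⟩ := Finite.exists_max (id : Fin k → Fin k)
    have hmem : top ∈ univ.filter (fun j => Sum.inr z ∈ hatSchema X σ j) := by
      simpa using htop z
    refine le_trans ?_
      (single_le_sum (fun j _ => add_nonneg (h.1 _) (lastAtomWeight_nonneg j)) hmem)
    simpa [lastAtomWeight, show ∀ i, i ≤ top from htop] using h.1 (σ top)

lemma sum_lift_hatSchema_le (lam : Fin k → ℝ) :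
    ∑ j, (lam (σ j) + lastAtomWeight j) ≤ ∑ i, lam i + 1 := by
  rw [sum_add_distrib, Equiv.sum_comp σ lam]
  linarith [sum_lastAtomWeight_le_one (k := k)]

variable {Bh : Finset (V ⊕ Fin k)} {B : Finset V}

lemma rhoStar_le_rhoStar_hatSchema (hB : ∀ x, Sum.inl x ∈ Bh ↔ x ∈ B) :
    rhoStar X B ≤ rhoStar (hatSchema X σ) Bh := by
  simpa using rhoStar_le_add_of_forall le_rfl
    (fun lam h => ⟨_, h.of_hatSchema fun x hx => (hB x).2 hx, by rw [Equiv.sum_comp, add_zero]⟩)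
    (fun _ h => ⟨_, h.lift_hatSchema (σ := σ) fun x hx => (hB x).1 hx⟩)

lemma rhoStar_hatSchema_le (hB : ∀ x, Sum.inl x ∈ Bh ↔ x ∈ B) :
    rhoStar (hatSchema X σ) Bh ≤ rhoStar X B + 1 :=
  rhoStar_le_add_of_forall zero_le_one
    (fun lam h => ⟨_, h.lift_hatSchema fun x hx => (hB x).1 hx, sum_lift_hatSchema_le lam⟩)
    (fun _ h => ⟨_, h.of_hatSchema fun x hx => (hB x).2 hx⟩)

end MultivariateExtension

namespace TreeDecomp

variable {k m : ℕ} {W W' : Type*}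

lemma nonempty_ι {X : Fin k → Finset W} (D : TreeDecomp X) : Nonempty D.ι :=
  D.isTree.connected.nonempty

def singleBag [DecidableEq W] (X : Fin k → Finset W) : TreeDecomp X where
  ι := Unit
  G := ⊥
  isTree := ⟨⟨SimpleGraph.preconnected_bot⟩, SimpleGraph.isAcyclic_bot⟩
  bag _ := univ.biUnion X
  covers i := ⟨(), subset_biUnion_of_mem X (mem_univ i)⟩
  connected _ u v := Subsingleton.elim u v ▸ SimpleGraph.Reachable.refl u

noncomputable def comap {X : Fin k → Finset W} {Y : Fin m → Finset W'} (f : W → W')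
    (hf : Function.Injective f) (D : TreeDecomp Y) (hXY : ∀ i, ∃ j, ∀ x ∈ X i, f x ∈ Y j) :
    TreeDecomp X where
  ι := D.ι
  G := D.G
  isTree := D.isTree
  bag t := (D.bag t).preimage f hf.injOn
  covers i := by
    obtain ⟨j, hj⟩ := hXY i
    obtain ⟨t, ht⟩ := D.covers j
    exact ⟨t, fun x hx => mem_preimage.mpr (ht (hj x hx))⟩
  connected x := by
    convert D.connected (f x) using 2 <;>
    exact Set.ext fun _ => mem_preimage

@[simp]
lemma mem_bag_comap {X : Fin k → Finset W} {Y : Fin m → Finset W'} {f : W → W'}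
    {hf : Function.Injective f} {D : TreeDecomp Y} {hXY : ∀ i, ∃ j, ∀ x ∈ X i, f x ∈ Y j}
    {t : D.ι} {x : W} : x ∈ (D.comap f hf hXY).bag t ↔ f x ∈ D.bag t :=
  mem_preimage (hf := hf.injOn)

def disjSumUniv {Z : Type*} [Fintype Z] {X : Fin k → Finset W} {Y : Fin m → Finset (W ⊕ Z)}
    (D : TreeDecomp X) (hXY : ∀ j, ∃ i, ∀ x, Sum.inl x ∈ Y j → x ∈ X i) : TreeDecomp Y where
  ι := D.ι
  G := D.G
  isTree := D.isTree
  bag t := (D.bag t).disjSum univ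
  covers j := by
    obtain ⟨i, hi⟩ := hXY j
    obtain ⟨t, ht⟩ := D.covers i
    refine ⟨t, ?_⟩
    rintro (x | z) hw
    · exact inl_mem_disjSum.mpr (ht (hi x hw))
    · exact inr_mem_disjSum.mpr (mem_univ z)
  connected
    | .inl x => by
      convert D.connected x using 2 <;>
      exact Set.ext fun _ => inl_mem_disjSum
    | .inr z => by
      convert (SimpleGraph.induceUnivIso D.G).symm.preconnected_iff.mp
        D.isTree.connected.preconnected using 2 <;>
      exact Set.eq_univ_of_forall fun _ => inr_mem_disjSum.mpr (mem_univ z)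

end TreeDecomp

section Width

variable {k m : ℕ} {W W' : Type*} [DecidableEq W] [DecidableEq W']

lemma rhoStar_le_tdWidth {X : Fin k → Finset W} (D : TreeDecomp X) (t : D.ι) :
    rhoStar X (D.bag t) ≤ tdWidth X D :=
  le_ciSup (f := fun t => rhoStar X (D.bag t)) (Set.finite_range _).bddAbove t

lemma tdWidth_le {X : Fin k → Finset W} (D : TreeDecomp X) {c : ℝ}
    (h : ∀ t, rhoStar X (D.bag t) ≤ c) : tdWidth X D ≤ c :=
  have := D.nonempty_ι
  ciSup_le h

lemma fhtw_le_tdWidth {X : Fin k → Finset W} (D : TreeDecomp X) : fhtw X ≤ tdWidth X D := by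
  refine csInf_le ⟨0, ?_⟩ ⟨D, rfl⟩
  rintro _ ⟨D', rfl⟩
  have := D'.nonempty_ι
  exact (rhoStar_nonneg X _).trans (rhoStar_le_tdWidth D' (Classical.arbitrary _))

lemma fhtw_le_add_of_forall {X : Fin k → Finset W} {Y : Fin m → Finset W'} {c : ℝ}
    (h : ∀ D : TreeDecomp X, ∃ D' : TreeDecomp Y, tdWidth Y D' ≤ tdWidth X D + c) :
    fhtw Y ≤ fhtw X + c := by
  suffices fhtw Y - c ≤ fhtw X by linarith
  refine le_csInf ⟨_, TreeDecomp.singleBag X, rfl⟩ ?_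
  rintro _ ⟨D, rfl⟩
  obtain ⟨D', hD'⟩ := h D
  linarith [fhtw_le_tdWidth D']

end Width

section MultivariateExtension

variable {k : ℕ} {V : Type*} [DecidableEq V] (X : Fin k → Finset V) (σ : Equiv.Perm (Fin k))

lemma fhtw_le_fhtw_hatSchema : fhtw X ≤ fhtw (hatSchema X σ) := by
  refine (fhtw_le_add_of_forall fun Dh => ?_).trans_eq (add_zero _)
  refine ⟨Dh.comap Sum.inl Sum.inl_injective fun i => ⟨σ.symm i, by simp⟩,
    tdWidth_le _ fun t => ?_⟩
  exact (rhoStar_le_rhoStar_hatSchema fun _ => TreeDecomp.mem_bag_comap.symm).trans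
    ((rhoStar_le_tdWidth Dh t).trans_eq (add_zero _).symm)

lemma fhtw_hatSchema_le : fhtw (hatSchema X σ) ≤ fhtw X + 1 :=
  fhtw_le_add_of_forall fun D =>
    ⟨D.disjSumUniv fun j => ⟨σ j, by simp⟩, tdWidth_le _ fun t =>
      (rhoStar_hatSchema_le fun _ => inl_mem_disjSum).trans
        (add_le_add_left (rhoStar_le_tdWidth D t) 1)⟩

end MultivariateExtension

theorem stmt_14_general {k : ℕ} {V : Type*} [DecidableEq V]
    (X : Fin k → Finset V) :
    fhtw X ≤ (⨆ σ : Equiv.Perm (Fin k), fhtw (hatSchema X σ)) ∧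
    (⨆ σ : Equiv.Perm (Fin k), fhtw (hatSchema X σ)) ≤ fhtw X + 1 :=
  ⟨le_ciSup_of_le (Set.finite_range _).bddAbove 1 (fhtw_le_fhtw_hatSchema X 1),
    ciSup_le (fhtw_hatSchema_le X)⟩

/-- **The width of the multivariate extension is between `w(Q)` and
`w(Q) + 1`**: for any query `Q` with atom schemas `X`,
`w(Q) ≤ w(Q̂) ≤ w(Q) + 1`, where `w(Q̂)` is the maximum of `w(Q̂_σ)` over all
components `σ` of the multivariate extension `Q̂`. -/
theorem stmt_14 {k : ℕ} {V : Type*} [DecidableEq V] [Fintype V]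
    (X : Fin k → Finset V) :
    fhtw X ≤ (⨆ σ : Equiv.Perm (Fin k), fhtw (hatSchema X σ)) ∧
    (⨆ σ : Equiv.Perm (Fin k), fhtw (hatSchema X σ)) ≤ fhtw X + 1 :=
  stmt_14_general X
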